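/- arXiv:1901.01644 — 2 statements merged into one kernel-verified Lean document; each statement's English description precedes it below -/
import Mathlib

section
/- Let Ã, A, P be invertible 2×2 complex matrices, c ∈ ℂ with |c| = 1, and let E be a 2×2 complex matrix such that c·P*AP = Ã + E and ‖E‖ ≤ |det Ã|/(8‖Ã‖+4). Set Δ = arg(det Ã / det A) (principal argument). Then there exists a sign ε ∈ {1, −1} such that |c − ε·e^{iΔ/2}| ≤ ‖E‖·(8‖Ã‖+4)/|det Ã|. -/
open Matrix

/-- The entrywise maximum norm `‖X‖ = max_{j,k} |x_{jk}|` on complex matrices. -/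
noncomputable def maxNorm {n : ℕ} (X : Matrix (Fin n) (Fin n) ℂ) : ℝ :=
  ((Finset.univ.sup fun p : Fin n × Fin n => ‖X p.1 p.2‖₊ : NNReal) : ℝ)

/-!
Taking determinants of `c • (Pᴴ * A * P) = Ã + E` gives `c² |det P|² det A = det Ã + δ` with
`δ = det (Ã + E) - det Ã` small. Hence `c²` lies on the ray through `w² (1 + δ / det Ã)`, where
`w = exp (i Δ / 2)`, so `|c² - w²| ≤ 2 |δ| / |det Ã|`. Since `|c - w|² + |c + w|² = 4`, the
smaller of the two factors of `|c² - w²| = |c - w| |c + w|` is at most `|c² - w²| / √2`.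
The hypothesis on `‖E‖` forces `4 ‖E‖ ≤ ‖Ã‖`, so `|δ| ≤ (9/2) ‖Ã‖ ‖E‖`, and `8 ≥ 9 / √2`.
-/

open Complex

section MaxNorm

variable {n : ℕ}

lemma norm_entry_le_maxNorm (X : Matrix (Fin n) (Fin n) ℂ) (i j : Fin n) :
    ‖X i j‖ ≤ maxNorm X := by
  have := Finset.le_sup (f := fun p : Fin n × Fin n => ‖X p.1 p.2‖₊) (Finset.mem_univ (i, j))
  exact_mod_cast this

lemma maxNorm_nonneg (X : Matrix (Fin n) (Fin n) ℂ) : 0 ≤ maxNorm X :=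
  NNReal.coe_nonneg _

end MaxNorm

lemma norm_mul_sub_mul_le {R : Type*} [NormedRing R] {a b c d : R} {x y : ℝ}
    (ha : ‖a‖ ≤ x) (hb : ‖b‖ ≤ y) (hc : ‖c‖ ≤ x) (hd : ‖d‖ ≤ y) :
    ‖a * b - c * d‖ ≤ 2 * (x * y) := by
  have hx : 0 ≤ x := (norm_nonneg _).trans ha
  calc ‖a * b - c * d‖ ≤ ‖a‖ * ‖b‖ + ‖c‖ * ‖d‖ :=
        (norm_sub_le _ _).trans (add_le_add (norm_mul_le _ _) (norm_mul_le _ _))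
    _ ≤ x * y + x * y := by gcongr
    _ = 2 * (x * y) := by ring

lemma norm_det_fin_two_le (X : Matrix (Fin 2) (Fin 2) ℂ) : ‖X.det‖ ≤ 2 * maxNorm X ^ 2 := by
  rw [det_fin_two, sq]
  exact norm_mul_sub_mul_le (norm_entry_le_maxNorm ..) (norm_entry_le_maxNorm ..)
    (norm_entry_le_maxNorm ..) (norm_entry_le_maxNorm ..)

lemma norm_det_add_sub_det_le (A E : Matrix (Fin 2) (Fin 2) ℂ) :
    ‖(A + E).det - A.det‖ ≤ 4 * (maxNorm A * maxNorm E) + 2 * maxNorm E ^ 2 := by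
  have hexpand : (A + E).det - A.det = (A 0 0 * E 1 1 - A 0 1 * E 1 0)
      + (E 0 0 * A 1 1 - E 0 1 * A 1 0) + (E 0 0 * E 1 1 - E 0 1 * E 1 0) := by
    simp only [det_fin_two, Matrix.add_apply]; ring
  have hA := norm_entry_le_maxNorm A
  have hE := norm_entry_le_maxNorm E
  have hmixed := norm_mul_sub_mul_le (hA 0 0) (hE 1 1) (hA 0 1) (hE 1 0)
  have hmixed' := norm_mul_sub_mul_le (hE 0 0) (hA 1 1) (hE 0 1) (hA 1 0)
  have hquad := norm_mul_sub_mul_le (hE 0 0) (hE 1 1) (hE 0 1) (hE 1 0)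
  rw [hexpand]
  refine (norm_add₃_le ..).trans ?_
  nlinarith

lemma det_smul_conjTranspose_mul_mul {n : ℕ} (c : ℂ) (A P : Matrix (Fin n) (Fin n) ℂ) :
    (c • (Pᴴ * A * P)).det = c ^ n * (normSq P.det : ℂ) * A.det := by
  rw [det_smul, det_mul, det_mul, det_conjTranspose, normSq_eq_conj_mul_self, Fintype.card_fin]
  simp only [RCLike.star_def]
  ring

lemma norm_sub_le_two_mul_of_eq_smul {E : Type*} [NormedAddCommGroup E] [NormedSpace ℝ E]
    {u v e : E} {t : ℝ} (ht : 0 ≤ t) (hu : ‖u‖ = 1) (he : ‖e‖ = 1) (huv : u = t • v) :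
    ‖u - e‖ ≤ 2 * ‖v - e‖ := by
  have htv : t * ‖v‖ = 1 := by rw [← hu, huv, norm_smul, Real.norm_of_nonneg ht]
  have hproj : ‖u - v‖ ≤ ‖v - e‖ :=
    calc ‖u - v‖ = |‖e‖ - ‖v‖| := by
          rw [huv, show t • v - v = (t - 1) • v by rw [sub_smul, one_smul], norm_smul,
            Real.norm_eq_abs, he, show (1 : ℝ) - ‖v‖ = (t - 1) * ‖v‖ by linear_combination -htv, abs_mul, abs_norm]
      _ ≤ ‖v - e‖ := by rw [norm_sub_rev v e]; exact abs_norm_sub_norm_le e v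
  calc ‖u - e‖ ≤ ‖u - v‖ + ‖v - e‖ := norm_sub_le_norm_sub_add_norm_sub u v e
    _ ≤ 2 * ‖v - e‖ := by linarith

lemma exists_sign_two_mul_sq_norm_sub_le {c w : ℂ} (hc : ‖c‖ = 1) (hw : ‖w‖ = 1) :
    ∃ ε : ℂ, (ε = 1 ∨ ε = -1) ∧ 2 * ‖c - ε * w‖ ^ 2 ≤ ‖c ^ 2 - w ^ 2‖ ^ 2 := by
  have hpar : ‖c + w‖ ^ 2 + ‖c - w‖ ^ 2 = 4 := by
    have := parallelogram_law_with_norm ℝ c w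
    rw [hc, hw] at this
    linarith
  have hfactor : ‖c ^ 2 - w ^ 2‖ = ‖c - w‖ * ‖c + w‖ := by
    rw [← norm_mul]; ring_nf
  rw [hfactor]
  rcases le_total ‖c - w‖ ‖c + w‖ with hle | hle
  · refine ⟨1, Or.inl rfl, ?_⟩
    have hq : 2 ≤ ‖c + w‖ ^ 2 := by nlinarith [norm_nonneg (c - w)]
    rw [one_mul]
    nlinarith [mul_le_mul_of_nonneg_left hq (sq_nonneg ‖c - w‖)]
  · refine ⟨-1, Or.inr rfl, ?_⟩
    have hq : 2 ≤ ‖c - w‖ ^ 2 := by nlinarith [norm_nonneg (c + w)]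
    rw [neg_one_mul, sub_neg_eq_add]
    nlinarith [mul_le_mul_of_nonneg_left hq (sq_nonneg ‖c + w‖)]

lemma exp_half_arg_mul_I_sq (z : ℂ) : exp ((z.arg / 2 : ℝ) * I) ^ 2 = exp (z.arg * I) := by
  rw [← exp_nat_mul]; push_cast; ring_nf

lemma exists_sign_sq_norm_sub_mul_le {c d D δ : ℂ} {t : ℝ} (hc : ‖c‖ = 1) (hd : d ≠ 0)
    (hD : D ≠ 0) (ht : 0 < t) (h : c ^ 2 * t * d = D + δ) :
    ∃ ε : ℂ, (ε = 1 ∨ ε = -1) ∧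
      (‖c - ε * exp (((D / d).arg / 2 : ℝ) * I)‖ * ‖D‖) ^ 2 ≤ 2 * ‖δ‖ ^ 2 := by
  set z := D / d
  set w := exp ((z.arg / 2 : ℝ) * I)
  have hw : ‖w‖ = 1 := norm_exp_ofReal_mul_I _
  have hw0 : w ≠ 0 := exp_ne_zero _
  have hzw : (‖z‖ : ℂ) * w ^ 2 = z := by rw [exp_half_arg_mul_I_sq, norm_mul_exp_arg_mul_I]
  have hDz : (‖z‖ : ℂ) * w ^ 2 * d = D := by rw [hzw, div_mul_cancel₀ _ hd]
  have hray : c ^ 2 / w ^ 2 = ((‖z‖ / t : ℝ) : ℂ) * (1 + δ / D) := by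
    rw [div_eq_iff (pow_ne_zero 2 hw0)]
    have ht' : (t : ℂ) ≠ 0 := ofReal_ne_zero.2 ht.ne'
    push_cast
    field_simp
    linear_combination (‖z‖ * w ^ 2 : ℂ) * h - c ^ 2 * t * hDz
  have hsq : ‖c ^ 2 - w ^ 2‖ * ‖D‖ ≤ 2 * ‖δ‖ := by
    have := norm_sub_le_two_mul_of_eq_smul (div_pos (norm_pos_iff.2 (div_ne_zero hD hd)) ht).le
      (by rw [norm_div, norm_pow, norm_pow, hc, hw, one_pow, div_one]) norm_one
      (hray.trans (real_smul).symm)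
    rwa [add_sub_cancel_left, norm_div, div_sub_one (pow_ne_zero 2 hw0), norm_div, norm_pow, hw,
      one_pow, div_one, mul_div_assoc', le_div_iff₀ (norm_pos_iff.2 hD)] at this
  obtain ⟨ε, hε, hbound⟩ := exists_sign_two_mul_sq_norm_sub_le hc hw
  refine ⟨ε, hε, ?_⟩
  have := pow_le_pow_left₀ (by positivity) hsq 2
  nlinarith [mul_le_mul_of_nonneg_right hbound (sq_nonneg ‖D‖)]

/-- Let `Ã, A, P` be invertible `2×2` complex matrices, `|c| = 1` and
`c·P*AP = Ã + E` with `‖E‖ ≤ |det Ã|/(8‖Ã‖+4)`. With `Δ = arg(det Ã / det A)` there is a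
sign `ε ∈ {1, −1}` with `|c − ε·e^{iΔ/2}| ≤ ‖E‖·(8‖Ã‖+4)/|det Ã|`. -/
theorem scalar_estimate_of_perturbed_conjugation
    (A A' P E : Matrix (Fin 2) (Fin 2) ℂ) (c : ℂ)
    (hA : IsUnit A) (hA' : IsUnit A') (hP : IsUnit P) (hc : ‖c‖ = 1)
    (heq : c • (Pᴴ * A * P) = A' + E)
    (hE : maxNorm E ≤ ‖A'.det‖ / (8 * maxNorm A' + 4)) :
    ∃ ε : ℂ, (ε = 1 ∨ ε = -1) ∧
      ‖c - ε * Complex.exp (((A'.det / A.det).arg / 2 : ℝ) * Complex.I)‖ ≤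
        maxNorm E * (8 * maxNorm A' + 4) / ‖A'.det‖ := by
  have hD : A'.det ≠ 0 := ((isUnit_iff_isUnit_det A').mp hA').ne_zero
  have hdet : c ^ 2 * (normSq P.det : ℂ) * A.det = A'.det + ((A' + E).det - A'.det) := by
    rw [← det_smul_conjTranspose_mul_mul, heq]; ring
  obtain ⟨ε, hε, hsq⟩ := exists_sign_sq_norm_sub_mul_le hc ((isUnit_iff_isUnit_det A).mp hA).ne_zero
    hD (normSq_pos.2 ((isUnit_iff_isUnit_det P).mp hP).ne_zero) hdet
  refine ⟨ε, hε, ?_⟩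
  have hM := maxNorm_nonneg A'
  have hη := maxNorm_nonneg E
  have hK : 0 < 8 * maxNorm A' + 4 := by positivity
  have hηK := (le_div_iff₀ hK).1 hE
  have hDM := norm_det_fin_two_le A'
  have hδ := norm_det_add_sub_det_le A' E
  have hηM : 4 * maxNorm E ≤ maxNorm A' := by nlinarith
  have hδ' : ‖(A' + E).det - A'.det‖ ≤ 9 / 2 * (maxNorm A' * maxNorm E) := by nlinarith
  rw [le_div_iff₀ (norm_pos_iff.2 hD)]
  refine (pow_le_pow_iff_left₀ (by positivity) (by positivity) two_ne_zero).1 ?_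
  have := pow_le_pow_left₀ (norm_nonneg _) hδ' 2
  nlinarith
end

section
/- Let 0 ≤ τ ≤ 1 and let M(τ) be the 2×2 complex matrix with rows (0,1) and (τ,0). Then for every c ∈ ℂ with |c| = 1 and every P ∈ GL₂(ℂ) one has ‖c·P*P − M(τ)‖ ≥ 1/3 in the entrywise maximum norm. In particular, M(τ) does not lie in the closure of the Ψ₁-orbit of the identity matrix I₂. -/
/-
For `|c| = 1` the matrix `X = c • Pᴴ P` is a scaled Gram matrix, so Cauchy–Schwarz gives
`‖X₀₁‖² ≤ ‖X₀₀‖ ‖X₁₁‖`. If every entry of `X - M(τ)` were smaller than `r` in absolute value, the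
diagonal entries of `X` would be smaller than `r` and `‖X₀₁‖ > 1 - r`, whence `(1 - r)² < r²`,
i.e. `r > 1/2`. So `X` stays at entrywise distance at least `1/2` from `M(τ)`, which also keeps
`M(τ)` out of the closure of the orbit.
-/

open Matrix

open scoped Matrix.Norms.Elementwise

theorem maxNorm_eq_norm {n : ℕ} (X : Matrix (Fin n) (Fin n) ℂ) : maxNorm X = ‖X‖ := by
  refine le_antisymm ?_ ((Matrix.norm_le_iff (NNReal.coe_nonneg _)).2 fun j k => ?_)
  · exact NNReal.coe_le_coe.2 <|
      Finset.sup_le fun p _ => Matrix.nnnorm_entry_le_entrywise_sup_nnnorm X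
  · exact NNReal.coe_le_coe.2 <|
      Finset.le_sup (f := fun p : Fin n × Fin n => ‖X p.1 p.2‖₊) (Finset.mem_univ (j, k))

theorem norm_conjTranspose_mul_self_apply_sq_le {𝕜 m n : Type*} [RCLike 𝕜] [Fintype m]
    (P : Matrix m n 𝕜) (i j : n) :
    ‖(Pᴴ * P) i j‖ ^ 2 ≤ ‖(Pᴴ * P) i i‖ * ‖(Pᴴ * P) j j‖ := by
  simp only [← inner_matrix_col_col, inner_self_eq_norm_sq_to_K, norm_pow, RCLike.norm_ofReal,
    abs_norm, ← mul_pow]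
  gcongr
  exact norm_inner_le_norm _ _

theorem half_le_norm_sub_antidiag {𝕜 : Type*} [NormedField 𝕜] {X : Matrix (Fin 2) (Fin 2) 𝕜}
    (hX : ‖X 0 1‖ ^ 2 ≤ ‖X 0 0‖ * ‖X 1 1‖) (t : 𝕜) : 1 / 2 ≤ ‖X - !![0, 1; t, 0]‖ := by
  have hentry (i j : Fin 2) : ‖(X - !![0, 1; t, 0]) i j‖ ≤ ‖X - !![0, 1; t, 0]‖ :=
    Matrix.norm_entry_le_entrywise_sup_norm _
  have h00 : ‖X 0 0‖ ≤ ‖X - !![0, 1; t, 0]‖ := by simpa using hentry 0 0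
  have h11 : ‖X 1 1‖ ≤ ‖X - !![0, 1; t, 0]‖ := by simpa using hentry 1 1
  have h01 : 1 - ‖X - !![0, 1; t, 0]‖ ≤ ‖X 0 1‖ := by
    have := norm_sub_norm_le 1 (X 0 1)
    rw [norm_one, norm_sub_rev] at this
    linarith [show ‖X 0 1 - 1‖ ≤ ‖X - !![0, 1; t, 0]‖ by simpa using hentry 0 1]
  nlinarith [norm_nonneg (X 0 0), norm_nonneg (X 1 1), norm_nonneg (X 0 1)]

theorem M_tau_far_from_orbit_of_identity_general (τ : ℝ) :
    (∀ (c : ℂ) (P : Matrix (Fin 2) (Fin 2) ℂ), ‖c‖ = 1 → IsUnit P →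
      (1 : ℝ) / 3 ≤ maxNorm (c • (Pᴴ * P) - !![(0 : ℂ), 1; (τ : ℂ), 0])) ∧
    (!![(0 : ℂ), 1; (τ : ℂ), 0]) ∉ closure {X : Matrix (Fin 2) (Fin 2) ℂ |
        ∃ (c : ℂ) (P : Matrix (Fin 2) (Fin 2) ℂ), ‖c‖ = 1 ∧ IsUnit P ∧
          X = c • (Pᴴ * (1 : Matrix (Fin 2) (Fin 2) ℂ) * P)} := by
  have far (c : ℂ) (P : Matrix (Fin 2) (Fin 2) ℂ) (hc : ‖c‖ = 1) :
      1 / 3 ≤ ‖c • (Pᴴ * P) - !![0, 1; (τ : ℂ), 0]‖ := by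
    have hgram : ‖(c • (Pᴴ * P)) 0 1‖ ^ 2 ≤ ‖(c • (Pᴴ * P)) 0 0‖ * ‖(c • (Pᴴ * P)) 1 1‖ := by
      simpa [norm_smul, hc] using norm_conjTranspose_mul_self_apply_sq_le P 0 1
    linarith [half_le_norm_sub_antidiag hgram τ]
  refine ⟨fun c P hc _ => maxNorm_eq_norm _ ▸ far c P hc, fun hmem => ?_⟩
  obtain ⟨_, ⟨c, P, hc, -, rfl⟩, hdist⟩ := Metric.mem_closure_iff.1 hmem (1 / 3) (by norm_num)
  rw [dist_comm, dist_eq_norm, Matrix.mul_one] at hdist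
  exact (far c P hc).not_gt hdist

/-- For `0 ≤ τ ≤ 1` and `M(τ) = [[0,1],[τ,0]]`, one has
`‖c·P*P − M(τ)‖ ≥ 1/3` for every `|c| = 1` and `P ∈ GL₂(ℂ)`; in particular `M(τ)` does
not lie in the closure of the `Ψ₁`-orbit of the identity matrix `I₂`. -/
theorem M_tau_far_from_orbit_of_identity (τ : ℝ) (h0 : 0 ≤ τ) (h1 : τ ≤ 1) :
    (∀ (c : ℂ) (P : Matrix (Fin 2) (Fin 2) ℂ), ‖c‖ = 1 → IsUnit P →
      (1 : ℝ) / 3 ≤ maxNorm (c • (Pᴴ * P) - !![(0 : ℂ), 1; (τ : ℂ), 0])) ∧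
    (!![(0 : ℂ), 1; (τ : ℂ), 0]) ∉ closure {X : Matrix (Fin 2) (Fin 2) ℂ |
        ∃ (c : ℂ) (P : Matrix (Fin 2) (Fin 2) ℂ), ‖c‖ = 1 ∧ IsUnit P ∧
          X = c • (Pᴴ * (1 : Matrix (Fin 2) (Fin 2) ℂ) * P)} :=
  M_tau_far_from_orbit_of_identity_general τ
end
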